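/- arXiv:2403.18773 — 6 statements merged into one kernel-verified Lean document; each statement's English description precedes it below -/
import Mathlib

section
/- Let A be a unital associative algebra with unit 1, M an A-bimodule, and (F,G,H) a triple of maps from A to M with F linear satisfying F(ab) = G(a)b + aH(b) for all a,b in A. Then the maps a ↦ G(a)·1 and a ↦ 1·H(a) are linear, and F(ab) = (G(a)·1)b + a(1·H(b)) for all a,b in A. -/
/-!
Putting `b = 1`, resp. `a = 1`, in the Leibniz identity expresses `G a = F a - a • H 1` and
`H b = F b - G 1 • b`; both right-hand sides are linear because `F` is. Since Mathlib's modules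
are unital, `G a • 1 = G a` and `1 • H b = H b`, so the last identity is the hypothesis itself.
-/

section GeneralizedLeibniz

variable {R A M : Type*} [CommSemiring R] [Semiring A] [Algebra R A]
  [AddCommGroup M] [Module R M] [Module A M] [Module Aᵐᵒᵖ M]

theorem eq_sub_smul_of_leibniz {F G H : A → M}
    (hFGH : ∀ a b : A, F (a * b) = MulOpposite.op b • G a + a • H b) (a : A) :
    G a = F a - a • H 1 := by
  rw [← mul_one a, hFGH, MulOpposite.op_one, one_smul, mul_one, add_sub_cancel_right]

theorem eq_sub_op_smul_of_leibniz {F G H : A → M}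
    (hFGH : ∀ a b : A, F (a * b) = MulOpposite.op b • G a + a • H b) (b : A) :
    H b = F b - MulOpposite.op b • G 1 := by
  rw [← one_mul b, hFGH, one_smul, one_mul, add_sub_cancel_left]

theorem exists_linearMap_eq_left_of_leibniz [IsScalarTower R A M] (F : A →ₗ[R] M) {G H : A → M}
    (hFGH : ∀ a b : A, F (a * b) = MulOpposite.op b • G a + a • H b) :
    ∃ G' : A →ₗ[R] M, ⇑G' = G :=
  ⟨F - LinearMap.smulRight LinearMap.id (H 1),
    funext fun a => (eq_sub_smul_of_leibniz hFGH a).symm⟩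

theorem exists_linearMap_eq_right_of_leibniz [IsScalarTower R Aᵐᵒᵖ M] (F : A →ₗ[R] M)
    {G H : A → M} (hFGH : ∀ a b : A, F (a * b) = MulOpposite.op b • G a + a • H b) :
    ∃ H' : A →ₗ[R] M, ⇑H' = H :=
  ⟨F - LinearMap.smulRight (MulOpposite.opLinearEquiv R).toLinearMap (G 1),
    funext fun b => (eq_sub_op_smul_of_leibniz hFGH b).symm⟩

end GeneralizedLeibniz

theorem stmt_0_general {A M : Type*} [Ring A] [Algebra ℂ A]
    [AddCommGroup M] [Module ℂ M] [Module A M] [Module Aᵐᵒᵖ M]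
    [IsScalarTower ℂ A M] [IsScalarTower ℂ Aᵐᵒᵖ M]
    (F : A →ₗ[ℂ] M) (G H : A → M)
    (hFGH : ∀ a b : A, F (a * b) = MulOpposite.op b • G a + a • H b) :
    (∃ G1 : A →ₗ[ℂ] M, ∀ a : A, G1 a = MulOpposite.op (1 : A) • G a) ∧
    (∃ H1 : A →ₗ[ℂ] M, ∀ a : A, H1 a = (1 : A) • H a) ∧
    (∀ a b : A, F (a * b) =
      MulOpposite.op b • (MulOpposite.op (1 : A) • G a) + a • ((1 : A) • H b)) := by
  simp only [MulOpposite.op_one, one_smul]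
  obtain ⟨G1, rfl⟩ := exists_linearMap_eq_left_of_leibniz F hFGH
  obtain ⟨H1, rfl⟩ := exists_linearMap_eq_right_of_leibniz F hFGH
  exact ⟨⟨G1, fun _ => rfl⟩, ⟨H1, fun _ => rfl⟩, hFGH⟩

/-- If `A` is a unital associative algebra, `M` an `A`-bimodule, `F` linear and
`F (a*b) = G a • b + a • H b` for all `a, b`, then `a ↦ G a · 1` and `a ↦ 1 · H a` are linear,
and `F (a*b) = (G a · 1) · b + a · (1 · H b)`. -/
theorem stmt_0 {A M : Type*} [Ring A] [Algebra ℂ A]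
    [AddCommGroup M] [Module ℂ M] [Module A M] [Module Aᵐᵒᵖ M]
    [SMulCommClass A Aᵐᵒᵖ M] [IsScalarTower ℂ A M] [IsScalarTower ℂ Aᵐᵒᵖ M]
    (F : A →ₗ[ℂ] M) (G H : A → M)
    (hFGH : ∀ a b : A, F (a * b) = MulOpposite.op b • G a + a • H b) :
    (∃ G1 : A →ₗ[ℂ] M, ∀ a : A, G1 a = MulOpposite.op (1 : A) • G a) ∧
    (∃ H1 : A →ₗ[ℂ] M, ∀ a : A, H1 a = (1 : A) • H a) ∧
    (∀ a b : A, F (a * b) =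
      MulOpposite.op b • (MulOpposite.op (1 : A) • G a) + a • ((1 : A) • H b)) :=
  stmt_0_general F G H hFGH
end

section
/- Let A be an algebra, M an A-bimodule with trivial right modular annihilator (m ∈ M and Am = 0 implies m = 0), and (F,G,H) a triple with F linear satisfying F(ab) = G(a)b + aH(b) for all a,b ∈ A. Then H is linear. Dually, if the left modular annihilator of A in M is trivial (mA = 0 implies m = 0), then G is linear. -/
/-!
Multiplying by `a` turns `H` into `b ↦ F (a * b) - op b • G a`, which is linear in `b`; so every
`a • (H (b + b') - H b - H b')` and `a • (H (c • b) - c • H b)` vanishes, and a trivial right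
annihilator forces the defects themselves to vanish. The same argument with the roles of the two
sides exchanged applies to `G`.
-/

theorem exists_linearMap_eq_of_forall_smul {R S N M : Type*} [Semiring R] [AddCommMonoid N]
    [Module R N] [AddCommGroup M] [Module R M] [Monoid S] [DistribMulAction S M]
    [SMulCommClass S R M] (hM : ∀ m : M, (∀ s : S, s • m = 0) → m = 0) (f : N → M)
    (φ : S → N →ₗ[R] M) (hφ : ∀ s x, s • f x = φ s x) : ∃ fl : N →ₗ[R] M, ⇑fl = f := by
  have eq_of_smul_eq {m m' : M} (h : ∀ s : S, s • m = s • m') : m = m' :=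
    sub_eq_zero.mp <| hM _ fun s ↦ by rw [smul_sub, h, sub_self]
  refine ⟨⟨⟨f, fun x y ↦ eq_of_smul_eq fun s ↦ ?_⟩, fun c x ↦ eq_of_smul_eq fun s ↦ ?_⟩, rfl⟩
  · rw [smul_add, hφ, hφ, hφ, map_add]
  · rw [RingHom.id_apply, smul_comm, hφ, hφ, map_smul]

theorem stmt_4_general {A M : Type*} [Ring A] [Algebra ℂ A]
    [AddCommGroup M] [Module ℂ M] [Module A M] [Module Aᵐᵒᵖ M]
    [IsScalarTower ℂ A M] [IsScalarTower ℂ Aᵐᵒᵖ M]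
    (F : A →ₗ[ℂ] M) (G H : A → M)
    (hFGH : ∀ a b : A, F (a * b) = MulOpposite.op b • G a + a • H b) :
    ((∀ m : M, (∀ a : A, a • m = 0) → m = 0) → ∃ Hl : A →ₗ[ℂ] M, ⇑Hl = H) ∧
    ((∀ m : M, (∀ a : A, MulOpposite.op a • m = 0) → m = 0) → ∃ Gl : A →ₗ[ℂ] M, ⇑Gl = G) := by
  constructor
  · intro hR
    refine exists_linearMap_eq_of_forall_smul hR H
      (fun a ↦ F ∘ₗ LinearMap.mulLeft ℂ a -
        LinearMap.smulRight (MulOpposite.opLinearEquiv ℂ).toLinearMap (G a)) fun a b ↦ ?_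
    simp [hFGH]
  · intro hL
    refine exists_linearMap_eq_of_forall_smul (S := Aᵐᵒᵖ) (fun m hm ↦ hL m fun a ↦ hm _) G
      (fun b ↦ F ∘ₗ LinearMap.mulRight ℂ b.unop - LinearMap.smulRight LinearMap.id (H b.unop))
      fun b a ↦ ?_
    simp [hFGH]

/-- trivial right modular annihilator forces `H` linear; trivial left
modular annihilator forces `G` linear. -/
theorem stmt_4 {A M : Type*} [Ring A] [Algebra ℂ A]
    [AddCommGroup M] [Module ℂ M] [Module A M] [Module Aᵐᵒᵖ M]
    [SMulCommClass A Aᵐᵒᵖ M] [IsScalarTower ℂ A M] [IsScalarTower ℂ Aᵐᵒᵖ M]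
    (F : A →ₗ[ℂ] M) (G H : A → M)
    (hFGH : ∀ a b : A, F (a * b) = MulOpposite.op b • G a + a • H b) :
    ((∀ m : M, (∀ a : A, a • m = 0) → m = 0) → ∃ Hl : A →ₗ[ℂ] M, ⇑Hl = H) ∧
    ((∀ m : M, (∀ a : A, MulOpposite.op a • m = 0) → m = 0) → ∃ Gl : A →ₗ[ℂ] M, ⇑Gl = G) :=
  stmt_4_general F G H hFGH
end

section
/- Let A be a commutative C*-algebra, M a Banach A-bimodule, and F : A → M a linear map. Define I = {a ∈ A : the map x ↦ F(ax) is continuous}. Suppose F(ab) = G(a)b + aH(b) for all a,b with G,H : A → M arbitrary maps. Then I is a closed (two-sided) ideal of A. -/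
/-!
Since `F (a * x) = G a • x + a • H x` and `x ↦ G a • x` is continuous, `a` lies in the ideal
exactly when `x ↦ a • H x` is continuous, and then this map is linear, being
`x ↦ F (a * x) - G a • x`. For `aₙ → a` in the ideal, the continuous linear maps `x ↦ aₙ • H x`
converge pointwise to `x ↦ a • H x`, which is therefore continuous by Banach–Steinhaus.
-/

open Filter Topology

section ContinuityIdeal

variable {A M : Type*} [CommRing A] [TopologicalSpace A] [ContinuousMul A]
  [AddCommMonoid M] [TopologicalSpace M] [ContinuousAdd M]

def AddMonoidHom.continuityIdeal (F : A →+ M) : Ideal A where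
  carrier := {a | Continuous fun x => F (a * x)}
  add_mem' {a b} ha hb := by
    show Continuous fun x => F ((a + b) * x)
    simp only [add_mul, map_add]
    exact ha.add hb
  zero_mem' := by
    show Continuous fun x => F (0 * x)
    simp only [zero_mul, map_zero]
    exact continuous_const
  smul_mem' r a ha := by
    show Continuous fun x => F (r * a * x)
    simp only [mul_assoc, ← mul_left_comm a r]
    exact ha.comp (continuous_const_mul r)

end ContinuityIdeal

section GeneralizedDerivation

variable {𝕜 A M : Type*} [NontriviallyNormedField 𝕜] [NormedCommRing A] [NormedAlgebra 𝕜 A]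
  [NormedAddCommGroup M] [NormedSpace 𝕜 M] [Module A M] [Module Aᵐᵒᵖ M] [IsBoundedSMul Aᵐᵒᵖ M]
  {F : A →ₗ[𝕜] M} {G H : A → M}

theorem mem_continuityIdeal_iff_continuous_smul
    (hFGH : ∀ a b : A, F (a * b) = MulOpposite.op b • G a + a • H b) {a : A} :
    a ∈ (F : A →+ M).continuityIdeal ↔ Continuous fun x => a • H x := by
  have hG : Continuous fun x : A => MulOpposite.op x • G a :=
    MulOpposite.continuous_op.smul continuous_const
  have hF : (fun x => F (a * x)) = fun x => MulOpposite.op x • G a + a • H x := funext (hFGH a)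
  change Continuous (fun x => F (a * x)) ↔ _
  rw [hF]
  exact ⟨fun h => (h.sub hG).congr fun x => add_sub_cancel_left _ _, hG.add⟩

theorem exists_continuousLinearMap_eq_smul [IsScalarTower 𝕜 Aᵐᵒᵖ M]
    (hFGH : ∀ a b : A, F (a * b) = MulOpposite.op b • G a + a • H b) {a : A}
    (ha : a ∈ (F : A →+ M).continuityIdeal) :
    ∃ g : A →L[𝕜] M, ∀ x, g x = a • H x :=
  ⟨⟨F ∘ₗ LinearMap.mulLeft 𝕜 a, ha⟩ -
    (MulOpposite.opContinuousLinearEquiv 𝕜 : A ≃L[𝕜] Aᵐᵒᵖ).toContinuousLinearMap.smulRight (G a),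
    fun x => by
      show F (a * x) - MulOpposite.op x • G a = _
      rw [hFGH, add_sub_cancel_left]⟩

theorem isClosed_continuityIdeal [CompleteSpace A] [IsBoundedSMul A M] [IsScalarTower 𝕜 Aᵐᵒᵖ M]
    (hFGH : ∀ a b : A, F (a * b) = MulOpposite.op b • G a + a • H b) :
    IsClosed ((F : A →+ M).continuityIdeal : Set A) := by
  refine IsSeqClosed.isClosed fun u a hu hlim => ?_
  choose g hg using fun n => exists_continuousLinearMap_eq_smul hFGH (hu n)
  have htend : Tendsto (fun n x => g n x) atTop (𝓝 fun x => a • H x) :=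
    tendsto_pi_nhds.2 fun x => by simpa only [hg] using hlim.smul_const (H x)
  exact (mem_continuityIdeal_iff_continuous_smul hFGH).2
    (continuousLinearMapOfTendsto g htend).continuous

end GeneralizedDerivation

theorem stmt_8_general {A M : Type*} [NormedCommRing A]
    [NormedAlgebra ℂ A] [CompleteSpace A]
    [NormedAddCommGroup M] [NormedSpace ℂ M]
    [Module A M] [Module Aᵐᵒᵖ M]
    [IsScalarTower ℂ Aᵐᵒᵖ M]
    (hbl : ∀ (a : A) (m : M), ‖a • m‖ ≤ ‖a‖ * ‖m‖)
    (hbr : ∀ (a : A) (m : M), ‖MulOpposite.op a • m‖ ≤ ‖a‖ * ‖m‖)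
    (F : A →ₗ[ℂ] M) (G H : A → M)
    (hFGH : ∀ a b : A, F (a * b) = MulOpposite.op b • G a + a • H b) :
    ∃ I : Ideal A, (I : Set A) = {a : A | Continuous fun x : A => F (a * x)} ∧
      IsClosed (I : Set A) := by
  have := IsBoundedSMul.of_norm_smul_le hbl
  have : IsBoundedSMul Aᵐᵒᵖ M := .of_norm_smul_le fun a => hbr a.unop
  exact ⟨(F : A →+ M).continuityIdeal, rfl, isClosed_continuityIdeal hFGH⟩

/-- for a commutative C*-algebra `A` and a generalized derivation of the third
type `F : A → M`, the set `{a : A | x ↦ F (a*x) is continuous}` is a closed ideal of `A`. -/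
theorem stmt_8 {A M : Type*} [NormedCommRing A] [StarRing A] [CStarRing A]
    [NormedAlgebra ℂ A] [CompleteSpace A] [StarModule ℂ A]
    [NormedAddCommGroup M] [NormedSpace ℂ M] [CompleteSpace M]
    [Module A M] [Module Aᵐᵒᵖ M] [SMulCommClass A Aᵐᵒᵖ M]
    [IsScalarTower ℂ A M] [IsScalarTower ℂ Aᵐᵒᵖ M]
    (hbl : ∀ (a : A) (m : M), ‖a • m‖ ≤ ‖a‖ * ‖m‖)
    (hbr : ∀ (a : A) (m : M), ‖MulOpposite.op a • m‖ ≤ ‖a‖ * ‖m‖)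
    (F : A →ₗ[ℂ] M) (G H : A → M)
    (hFGH : ∀ a b : A, F (a * b) = MulOpposite.op b • G a + a • H b) :
    ∃ I : Ideal A, (I : Set A) = {a : A | Continuous fun x : A => F (a * x)} ∧
      IsClosed (I : Set A) :=
  stmt_8_general hbl hbr F G H hFGH
end

section
/- Let A be a C*-algebra, M a Banach A-bimodule with trivial left and right modular annihilators, and (F,G,H) a triple of maps from A to M with F linear satisfying F(ab) = G(a)b + aH(b) for all a,b ∈ A. If F is continuous, then G and H are linear and continuous. -/
/-!
For fixed `a` the identity gives `a • H b = F (a * b) - op b • G a`, a continuous linear function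
of `b`; symmetrically `op b • G a` is continuous and linear in `a`. Since `M` has trivial
annihilators, `m ↦ (a ↦ a • m)` is injective, so `H` inherits linearity from the maps `a • H`, and
a limit `y` of `H uₙ` with `uₙ → x` satisfies `a • y = a • H x` for every `a`, i.e. `y = H x`:
the graph of `H` is closed.
-/

open Function MulOpposite

theorem IsLinearMap.of_injective_comp {R M N P : Type*} [Semiring R] [AddCommMonoid M]
    [AddCommMonoid N] [AddCommMonoid P] [Module R M] [Module R N] [Module R P]
    {f : M → N} (T : N →ₗ[R] P) (hT : Injective T) (h : IsLinearMap R (T ∘ f)) :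
    IsLinearMap R f where
  map_add x y := hT <| (h.map_add x y).trans (T.map_add _ _).symm
  map_smul c x := hT <| (h.map_smul c x).trans (T.map_smul _ _).symm

theorem LinearMap.continuous_of_injective_comp {𝕜 E F X : Type*} [NontriviallyNormedField 𝕜]
    [NormedAddCommGroup E] [NormedSpace 𝕜 E] [CompleteSpace E]
    [NormedAddCommGroup F] [NormedSpace 𝕜 F] [CompleteSpace F]
    [TopologicalSpace X] [T2Space X] (f : E →ₗ[𝕜] F) {T : F → X} (hT : Continuous T)
    (hT' : Injective T) (h : Continuous (T ∘ f)) : Continuous f :=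
  f.continuous_of_seq_closed_graph fun _u x y hu hy =>
    hT' <| tendsto_nhds_unique ((hT.tendsto y).comp hy) ((h.tendsto x).comp hu)

theorem exists_continuousLinearMap_eq_of_forall_smul {𝕜 R E M : Type*}
    [NontriviallyNormedField 𝕜] [NormedAddCommGroup E] [NormedSpace 𝕜 E] [CompleteSpace E]
    [NormedAddCommGroup M] [NormedSpace 𝕜 M] [CompleteSpace M]
    [DistribSMul R M] [SMulCommClass R 𝕜 M] [ContinuousConstSMul R M]
    (hM : ∀ m : M, (∀ r : R, r • m = 0) → m = 0) (f : E → M)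
    (hlin : ∀ r : R, IsLinearMap 𝕜 fun x => r • f x)
    (hcont : ∀ r : R, Continuous fun x => r • f x) :
    ∃ g : E →L[𝕜] M, ⇑g = f := by
  let T : M →ₗ[𝕜] R → M := LinearMap.pi fun r => DistribSMul.toLinearMap 𝕜 M r
  have hT : Injective T := (injective_iff_map_eq_zero T).2 fun m hm => hM m (congr_fun hm)
  have hTf : IsLinearMap 𝕜 (T ∘ f) :=
    ⟨fun x y => funext fun r => (hlin r).map_add x y,
      fun c x => funext fun r => (hlin r).map_smul c x⟩
  let g := (hTf.of_injective_comp T hT).mk' f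
  exact ⟨⟨g, g.continuous_of_injective_comp (continuous_pi fun r => continuous_const_smul r) hT
    (continuous_pi hcont)⟩, rfl⟩

section Bimodule

variable {𝕜 A M : Type*} [NontriviallyNormedField 𝕜] [NormedRing A] [NormedAlgebra 𝕜 A]
  [CompleteSpace A] [NormedAddCommGroup M] [NormedSpace 𝕜 M] [CompleteSpace M]
  [Module A M] [Module Aᵐᵒᵖ M] [IsScalarTower 𝕜 A M] [IsScalarTower 𝕜 Aᵐᵒᵖ M]
  [ContinuousSMul A M] [ContinuousSMul Aᵐᵒᵖ M]

theorem exists_continuousLinearMap_eq_right_of_map_mul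
    (hM : ∀ m : M, (∀ a : A, a • m = 0) → m = 0) (F : A →L[𝕜] M) (G H : A → M)
    (hFGH : ∀ a b : A, F (a * b) = op b • G a + a • H b) :
    ∃ Hl : A →L[𝕜] M, ⇑Hl = H := by
  have hH (a : A) : (fun b => a • H b) = fun b => F (a * b) - op b • G a :=
    funext fun b => eq_sub_of_add_eq' (hFGH a b).symm
  refine exists_continuousLinearMap_eq_of_forall_smul hM H (fun a => ?_) (fun a => ?_) <;>
    rw [hH a]
  · constructor
    · intro b c
      simp only [mul_add, map_add, op_add, add_smul]
      abel
    · intro c b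
      simp only [mul_smul_comm, map_smul, op_smul, smul_assoc, smul_sub]
  · fun_prop

theorem exists_continuousLinearMap_eq_left_of_map_mul
    (hM : ∀ m : M, (∀ a : A, op a • m = 0) → m = 0) (F : A →L[𝕜] M) (G H : A → M)
    (hFGH : ∀ a b : A, F (a * b) = op b • G a + a • H b) :
    ∃ Gl : A →L[𝕜] M, ⇑Gl = G := by
  have hG (b : Aᵐᵒᵖ) : (fun a => b • G a) = fun a => F (a * b.unop) - a • H b.unop :=
    funext fun a => eq_sub_of_add_eq (hFGH a b.unop).symm
  refine exists_continuousLinearMap_eq_of_forall_smul (R := Aᵐᵒᵖ)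
    (fun m hm => hM m fun a => hm (op a)) G (fun b => ?_) (fun b => ?_) <;> rw [hG b]
  · constructor
    · intro a c
      simp only [add_mul, map_add, add_smul]
      abel
    · intro c a
      simp only [smul_mul_assoc, map_smul, smul_assoc, smul_sub]
  · fun_prop

end Bimodule

theorem stmt_10_general {A M : Type*} [NormedRing A] [NormedAlgebra ℂ A] [CompleteSpace A]
    [NormedAddCommGroup M] [NormedSpace ℂ M] [CompleteSpace M]
    [Module A M] [Module Aᵐᵒᵖ M] [IsScalarTower ℂ A M] [IsScalarTower ℂ Aᵐᵒᵖ M]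
    (hbl : ∀ (a : A) (m : M), ‖a • m‖ ≤ ‖a‖ * ‖m‖)
    (hbr : ∀ (a : A) (m : M), ‖MulOpposite.op a • m‖ ≤ ‖a‖ * ‖m‖)
    (hrann : ∀ m : M, (∀ a : A, a • m = 0) → m = 0)
    (hlann : ∀ m : M, (∀ a : A, MulOpposite.op a • m = 0) → m = 0)
    (F : A →ₗ[ℂ] M) (G H : A → M)
    (hFGH : ∀ a b : A, F (a * b) = MulOpposite.op b • G a + a • H b)
    (hFc : Continuous F) :
    (∃ Gl : A →ₗ[ℂ] M, ⇑Gl = G) ∧ Continuous G ∧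
    (∃ Hl : A →ₗ[ℂ] M, ⇑Hl = H) ∧ Continuous H := by
  have : IsBoundedSMul A M := .of_norm_smul_le hbl
  have : IsBoundedSMul Aᵐᵒᵖ M := .of_norm_smul_le fun a => hbr a.unop
  obtain ⟨Gl, rfl⟩ := exists_continuousLinearMap_eq_left_of_map_mul hlann ⟨F, hFc⟩ G H hFGH
  obtain ⟨Hl, rfl⟩ := exists_continuousLinearMap_eq_right_of_map_mul hrann ⟨F, hFc⟩ Gl H hFGH
  exact ⟨⟨Gl, rfl⟩, Gl.continuous, ⟨Hl, rfl⟩, Hl.continuous⟩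

/-- if the bimodule has trivial left and right modular annihilators and `F` is
continuous, then `G` and `H` are linear and continuous. -/
theorem stmt_10 {A M : Type*} [NormedRing A] [StarRing A] [CStarRing A]
    [NormedAlgebra ℂ A] [CompleteSpace A] [StarModule ℂ A]
    [NormedAddCommGroup M] [NormedSpace ℂ M] [CompleteSpace M]
    [Module A M] [Module Aᵐᵒᵖ M] [SMulCommClass A Aᵐᵒᵖ M]
    [IsScalarTower ℂ A M] [IsScalarTower ℂ Aᵐᵒᵖ M]
    (hbl : ∀ (a : A) (m : M), ‖a • m‖ ≤ ‖a‖ * ‖m‖)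
    (hbr : ∀ (a : A) (m : M), ‖MulOpposite.op a • m‖ ≤ ‖a‖ * ‖m‖)
    (hrann : ∀ m : M, (∀ a : A, a • m = 0) → m = 0)
    (hlann : ∀ m : M, (∀ a : A, MulOpposite.op a • m = 0) → m = 0)
    (F : A →ₗ[ℂ] M) (G H : A → M)
    (hFGH : ∀ a b : A, F (a * b) = MulOpposite.op b • G a + a • H b)
    (hFc : Continuous F) :
    (∃ Gl : A →ₗ[ℂ] M, ⇑Gl = G) ∧ Continuous G ∧
    (∃ Hl : A →ₗ[ℂ] M, ⇑Hl = H) ∧ Continuous H :=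
  stmt_10_general hbl hbr hrann hlann F G H hFGH hFc
end

section
/- Let A be a C*-algebra, M a Banach A-bimodule, and suppose F : A → M is linear, continuous, and there exist maps G, H : A → M with F(ab) = G(a)b + aH(b) for all a,b ∈ A. Then for all a, b, c ∈ A with a, b, c self-adjoint and ab = bc = 0, one has aF(b)c = 0. -/
/-!
Write `b = d₊ d₊ - d₋ d₋` with `d± = √(b^±)` computed by the functional calculus of `b`.
Every continuous function of `b` vanishing at `0` is a limit of polynomials in `b` without
constant term, so `a d± = 0` and `d± c = 0`. Hence `a F(d²) c = a G(d) d c + a d H(d) c = 0`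
for `d = d±`, and linearity of `F` gives `a F(b) c = 0`.
-/

open MulOpposite

section QuasispectrumAnnihilator

variable {A : Type*} [NonUnitalRing A] [StarRing A] [TopologicalSpace A] [Module ℝ A]
  [IsScalarTower ℝ A A] [SMulCommClass ℝ A A]
  [NonUnitalContinuousFunctionalCalculus ℝ A IsSelfAdjoint]

theorem mul_cfcₙ_eq_zero_of_mul_eq_zero [IsTopologicalRing A] [T2Space A] {a b : A}
    (hab : a * b = 0) (f : ℝ → ℝ) : a * cfcₙ f b = 0 := by
  refine cfcₙ_cases (fun x ↦ a * x = 0) b f (mul_zero a) fun _ _ hb ↦ ?_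
  have : CompactSpace (quasispectrum ℝ b) := isCompact_iff_compactSpace.mp
    (NonUnitalContinuousFunctionalCalculus.isCompact_quasispectrum b)
  refine ContinuousMapZero.mul_nonUnitalStarAlgHom_apply_eq_zero _ a ?_ ?_
    (cfcₙHom_continuous hb) _
  all_goals simpa only [star_trivial, cfcₙHom_id] using hab

theorem cfcₙ_mul_eq_zero_of_mul_eq_zero [IsTopologicalRing A] [T2Space A] {b c : A}
    (hbc : b * c = 0) (f : ℝ → ℝ) : cfcₙ f b * c = 0 := by
  refine cfcₙ_cases (fun x ↦ x * c = 0) b f (zero_mul c) fun _ _ hb ↦ ?_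
  have : CompactSpace (quasispectrum ℝ b) := isCompact_iff_compactSpace.mp
    (NonUnitalContinuousFunctionalCalculus.isCompact_quasispectrum b)
  refine ContinuousMapZero.nonUnitalStarAlgHom_apply_mul_eq_zero _ c ?_ ?_
    (cfcₙHom_continuous hb) _
  all_goals simpa only [star_trivial, cfcₙHom_id] using hbc

theorem IsSelfAdjoint.sqrt_posPart_mul_self_sub_sqrt_negPart_mul_self {b : A}
    (hb : IsSelfAdjoint b) :
    cfcₙ (fun x ↦ √x⁺) b * cfcₙ (fun x ↦ √x⁺) b - cfcₙ (fun x ↦ √x⁻) b * cfcₙ (fun x ↦ √x⁻) b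
      = b := by
  rw [← cfcₙ_mul _ _ b, ← cfcₙ_mul _ _ b, ← cfcₙ_sub _ _ b]
  conv_rhs => rw [← cfcₙ_id' ℝ b]
  refine cfcₙ_congr fun x _ ↦ ?_
  simp only [Real.mul_self_sqrt (posPart_nonneg x), Real.mul_self_sqrt (negPart_nonneg x),
    posPart_sub_negPart]

end QuasispectrumAnnihilator

theorem smul_op_smul_map_mul_self_eq_zero {A M : Type*} [Ring A] [AddCommGroup M]
    [Module A M] [Module Aᵐᵒᵖ M] [SMulCommClass A Aᵐᵒᵖ M] {F G H : A → M}
    (hFGH : ∀ a b : A, F (a * b) = op b • G a + a • H b) {a c x : A}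
    (hax : a * x = 0) (hxc : x * c = 0) : a • (op c • F (x * x)) = 0 := by
  rw [hFGH, smul_add, smul_add, ← mul_smul, ← op_mul, hxc, op_zero, zero_smul, smul_zero,
    smul_comm a (op c), ← mul_smul, hax, zero_smul, smul_zero, zero_add]

theorem stmt_16_general {A M : Type*} [NormedRing A] [StarRing A] [CStarRing A]
    [NormedAlgebra ℂ A] [CompleteSpace A] [StarModule ℂ A]
    [NormedAddCommGroup M] [NormedSpace ℂ M]
    [Module A M] [Module Aᵐᵒᵖ M] [SMulCommClass A Aᵐᵒᵖ M]
    (F : A →ₗ[ℂ] M) (G H : A → M)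
    (hFGH : ∀ a b : A, F (a * b) = MulOpposite.op b • G a + a • H b) :
    ∀ a b c : A, IsSelfAdjoint a → IsSelfAdjoint b → IsSelfAdjoint c →
      a * b = 0 → b * c = 0 → a • (MulOpposite.op c • F b) = 0 := by
  intro a b c _ hb _ hab hbc
  let : CStarAlgebra A := { }
  have hF (f : ℝ → ℝ) : a • (op c • F (cfcₙ f b * cfcₙ f b)) = 0 :=
    smul_op_smul_map_mul_self_eq_zero hFGH (mul_cfcₙ_eq_zero_of_mul_eq_zero hab f)
      (cfcₙ_mul_eq_zero_of_mul_eq_zero hbc f)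
  rw [← hb.sqrt_posPart_mul_self_sub_sqrt_negPart_mul_self, map_sub, smul_sub, smul_sub, hF, hF,
    sub_zero]

/-- if `F` is a continuous generalized derivation of the third type from a
C*-algebra `A` into a Banach `A`-bimodule, then `a F(b) c = 0` whenever `a, b, c` are
self-adjoint with `ab = bc = 0`. -/
theorem stmt_16 {A M : Type*} [NormedRing A] [StarRing A] [CStarRing A]
    [NormedAlgebra ℂ A] [CompleteSpace A] [StarModule ℂ A]
    [NormedAddCommGroup M] [NormedSpace ℂ M] [CompleteSpace M]
    [Module A M] [Module Aᵐᵒᵖ M] [SMulCommClass A Aᵐᵒᵖ M]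
    [IsScalarTower ℂ A M] [IsScalarTower ℂ Aᵐᵒᵖ M]
    (hbl : ∀ (a : A) (m : M), ‖a • m‖ ≤ ‖a‖ * ‖m‖)
    (hbr : ∀ (a : A) (m : M), ‖MulOpposite.op a • m‖ ≤ ‖a‖ * ‖m‖)
    (F : A →ₗ[ℂ] M) (hFc : Continuous F) (G H : A → M)
    (hFGH : ∀ a b : A, F (a * b) = MulOpposite.op b • G a + a • H b) :
    ∀ a b c : A, IsSelfAdjoint a → IsSelfAdjoint b → IsSelfAdjoint c →
      a * b = 0 → b * c = 0 → a • (MulOpposite.op c • F b) = 0 :=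
  stmt_16_general F G H hFGH
end

section
/- Let A be a C*-algebra and b ∈ A self-adjoint, a, c ∈ A self-adjoint with ab = bc = 0. Then there exists d ∈ A with d² = b, ad = 0, and dc = 0. -/
/-!
Split `b = b⁺ - b⁻` and take `d = √b⁺ + i √b⁻`. Since `b⁺ b⁻ = b⁻ b⁺ = 0`, the cross terms of
`d²` vanish and `d² = b⁺ - b⁻ = b`. For a self-adjoint `x`, the elements `z` with
`x z = z x = 0` form a closed non-unital star subalgebra; it contains `b` when `x = a` or `x = c`,
hence everything the continuous functional calculus produces from `b`, in particular `d`.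
-/

open CFC Complex

namespace IsSelfAdjoint

variable (R : Type*) {A : Type*} [CommSemiring R] [NonUnitalRing A] [StarRing A] [Module R A]
  [IsScalarTower R A A] [SMulCommClass R A A]

def biAnnihilator {x : A} (hx : IsSelfAdjoint x) : NonUnitalStarSubalgebra R A where
  carrier := {z | x * z = 0 ∧ z * x = 0}
  add_mem' hy hz := ⟨by rw [mul_add, hy.1, hz.1, add_zero], by rw [add_mul, hy.2, hz.2, add_zero]⟩
  zero_mem' := ⟨mul_zero x, zero_mul x⟩
  mul_mem' hy hz := ⟨by rw [← mul_assoc, hy.1, zero_mul], by rw [mul_assoc, hz.2, mul_zero]⟩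
  smul_mem' _ _ hy :=
    ⟨by rw [mul_smul_comm, hy.1, smul_zero], by rw [smul_mul_assoc, hy.2, smul_zero]⟩
  star_mem' hy := ⟨by simpa [hx.star_eq] using congrArg star hy.2,
    by simpa [hx.star_eq] using congrArg star hy.1⟩

variable {R}

lemma mem_biAnnihilator_comm {x y : A} (hx : IsSelfAdjoint x) (hy : IsSelfAdjoint y) :
    y ∈ hx.biAnnihilator R ↔ x ∈ hy.biAnnihilator R :=
  And.comm

lemma mem_biAnnihilator_of_mul_eq_zero {x y : A} (hx : IsSelfAdjoint x) (hy : IsSelfAdjoint y)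
    (h : x * y = 0) : y ∈ hx.biAnnihilator R :=
  ⟨h, by simpa [hx.star_eq, hy.star_eq] using congrArg star h⟩

lemma isClosed_biAnnihilator [TopologicalSpace A] [IsTopologicalRing A] [T2Space A] {x : A}
    (hx : IsSelfAdjoint x) : IsClosed (hx.biAnnihilator R : Set A) :=
  (isClosed_eq (continuous_const_mul x) continuous_const).inter
    (isClosed_eq (continuous_mul_const x) continuous_const)

variable {A : Type*} [NonUnitalCStarAlgebra A] {x y : A}

lemma cfcₙ_mem_biAnnihilator (hx : IsSelfAdjoint x) (hy : y ∈ hx.biAnnihilator ℂ) (f : ℝ → ℝ) :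
    cfcₙ f y ∈ hx.biAnnihilator ℂ :=
  have := hx.isClosed_biAnnihilator (R := ℂ)
  cfcₙ_mem f hy

variable [PartialOrder A] [StarOrderedRing A]

lemma sqrt_mem_biAnnihilator (hx : IsSelfAdjoint x) (hy : y ∈ hx.biAnnihilator ℂ) (hy₀ : 0 ≤ y) :
    sqrt y ∈ hx.biAnnihilator ℂ :=
  sqrt_eq_real_sqrt y ▸ hx.cfcₙ_mem_biAnnihilator hy _

end IsSelfAdjoint

section

variable {A : Type*} [NonUnitalCStarAlgebra A] [PartialOrder A] [StarOrderedRing A]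

lemma sqrt_posPart_mem_biAnnihilator_sqrt_negPart (b : A) :
    sqrt b⁺ ∈ (sqrt_nonneg b⁻).isSelfAdjoint.biAnnihilator ℂ := by
  have hpos := (posPart_nonneg b).isSelfAdjoint
  have hneg : b⁻ ∈ hpos.biAnnihilator ℂ := ⟨posPart_mul_negPart b, negPart_mul_posPart b⟩
  have hsqrt : sqrt b⁻ ∈ hpos.biAnnihilator ℂ := hpos.sqrt_mem_biAnnihilator hneg (negPart_nonneg b)
  rw [IsSelfAdjoint.mem_biAnnihilator_comm _ (sqrt_nonneg b⁻).isSelfAdjoint] at hsqrt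
  exact IsSelfAdjoint.sqrt_mem_biAnnihilator _ hsqrt (posPart_nonneg b)

lemma sqrt_posPart_add_I_smul_sqrt_negPart_mul_self {b : A} (hb : IsSelfAdjoint b) :
    (sqrt b⁺ + I • sqrt b⁻) * (sqrt b⁺ + I • sqrt b⁻) = b := by
  obtain ⟨hmul_neg_pos, hmul_pos_neg⟩ := sqrt_posPart_mem_biAnnihilator_sqrt_negPart b
  calc (sqrt b⁺ + I • sqrt b⁻) * (sqrt b⁺ + I • sqrt b⁻)
        = sqrt b⁺ * sqrt b⁺ - sqrt b⁻ * sqrt b⁻ := by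
        rw [add_mul, mul_add, mul_add, mul_smul_comm, smul_mul_assoc, smul_mul_smul_comm,
          hmul_neg_pos, hmul_pos_neg, I_mul_I, neg_one_smul, smul_zero, add_zero, zero_add,
          sub_eq_add_neg]
    _ = b⁺ - b⁻ := by
        rw [sqrt_mul_sqrt_self _ (posPart_nonneg b), sqrt_mul_sqrt_self _ (negPart_nonneg b)]
    _ = b := posPart_sub_negPart b hb

lemma IsSelfAdjoint.sqrt_posPart_add_I_smul_sqrt_negPart_mem_biAnnihilator {x b : A}
    (hx : IsSelfAdjoint x) (hb : b ∈ hx.biAnnihilator ℂ) :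
    sqrt b⁺ + I • sqrt b⁻ ∈ hx.biAnnihilator ℂ :=
  add_mem (hx.sqrt_mem_biAnnihilator (hx.cfcₙ_mem_biAnnihilator hb _) (posPart_nonneg b))
    (SMulMemClass.smul_mem I
      (hx.sqrt_mem_biAnnihilator (hx.cfcₙ_mem_biAnnihilator hb _) (negPart_nonneg b)))

end

/-- for self-adjoint `a, b, c` in a C*-algebra with `ab = bc = 0`, there
exists `d` with `d² = b`, `ad = 0` and `dc = 0`. -/
theorem stmt_17 {A : Type*} [NormedRing A] [StarRing A] [CStarRing A]
    [NormedAlgebra ℂ A] [CompleteSpace A] [StarModule ℂ A]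
    (a b c : A) (ha : IsSelfAdjoint a) (hb : IsSelfAdjoint b) (hc : IsSelfAdjoint c)
    (hab : a * b = 0) (hbc : b * c = 0) :
    ∃ d : A, d ^ 2 = b ∧ a * d = 0 ∧ d * c = 0 := by
  let : CStarAlgebra A := {}
  let := CStarAlgebra.spectralOrder A
  have := CStarAlgebra.spectralOrderedRing A
  have hba : b ∈ ha.biAnnihilator ℂ := ha.mem_biAnnihilator_of_mul_eq_zero hb hab
  have hbc : b ∈ hc.biAnnihilator ℂ :=
    (hb.mem_biAnnihilator_comm hc).1 (hb.mem_biAnnihilator_of_mul_eq_zero hc hbc)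
  exact ⟨sqrt b⁺ + I • sqrt b⁻, 
    (sq _).trans (sqrt_posPart_add_I_smul_sqrt_negPart_mul_self hb),
    (ha.sqrt_posPart_add_I_smul_sqrt_negPart_mem_biAnnihilator hba).1,
    (hc.sqrt_posPart_add_I_smul_sqrt_negPart_mem_biAnnihilator hbc).2⟩
end
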